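/- Let μ be a partition of n+k and let {(a₁,b₁),…,(a_k,b_k)} be a set of k distinct cells of μ, listed in increasing lexicographic order. Then ∂x_{n+1}^{a₁}∂y_{n+1}^{b₁}⋯∂x_{n+k}^{a_k}∂y_{n+k}^{b_k} Δ_μ(X_{n+k};Y_{n+k}) = c · Δ_{μ/{(a₁,b₁),…,(a_k,b_k)}}(X_n;Y_n) + C, where c is a nonzero rational constant and C is a linear combination, with coefficients in ℚ[x_{n+1},y_{n+1},…,x_{n+k},y_{n+k}] all vanishing at x_{n+1}=y_{n+1}=⋯=x_{n+k}=y_{n+k}=0, of polynomials Δ_{μ/{(a′₁,b′₁),…,(a′_k,b′_k)}}(X_n;Y_n) with each cell (a′_j,b′_j) ∈ μ lying in the shadow of (a_j,b_j). -/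

import Mathlib

open MvPolynomial

noncomputable section

/-- The monomial differential operator `∂^m` applied to a polynomial `Q`:
if `m = (m_v)_v`, this is `∏_v (∂/∂x_v)^{m_v}` applied to `Q`. -/
def monDiff {σ : Type*} [DecidableEq σ] (m : σ →₀ ℕ) (Q : MvPolynomial σ ℚ) :
    MvPolynomial σ ℚ :=
  ∑ a ∈ Q.support,
    MvPolynomial.monomial (a - m) (Q.coeff a * ∏ v ∈ m.support, ((a v).descFactorial (m v) : ℚ))

/-- The differential operator `P(∂)` applied to `Q`. -/
def applyDiff {σ : Type*} [DecidableEq σ] (P Q : MvPolynomial σ ℚ) : MvPolynomial σ ℚ :=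
  ∑ m ∈ P.support, P.coeff m • monDiff m Q

/-- The linear span of `Q` and all its partial derivatives (of all orders),
i.e. the space `L_∂[Q]`. -/
def derivSpan {σ : Type*} [DecidableEq σ] (Q : MvPolynomial σ ℚ) :
    Submodule ℚ (MvPolynomial σ ℚ) :=
  Submodule.span ℚ {R | ∃ m : σ →₀ ℕ, R = monDiff m Q}

/-- Strict pseudo-lexicographic order: compare second coordinates first. -/
def plexLT {α : Type*} [LinearOrder α] (a b : α × α) : Prop :=
  a.2 < b.2 ∨ (a.2 = b.2 ∧ a.1 < b.1)

/-- Pseudo-lexicographic order on `ℕ × ℕ`. -/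
def plexLE (a b : ℕ × ℕ) : Prop :=
  a.2 < b.2 ∨ (a.2 = b.2 ∧ a.1 ≤ b.1)

instance : DecidableRel plexLE := fun a b => by unfold plexLE; exact inferInstance
instance : IsTrans (ℕ × ℕ) plexLE := ⟨by intro a b c hab hbc; unfold plexLE at *; omega⟩
instance : IsAntisymm (ℕ × ℕ) plexLE := ⟨by
  intro a b hab hba
  unfold plexLE at hab hba
  have h1 : a.1 = b.1 := by omega
  have h2 : a.2 = b.2 := by omega
  exact Prod.ext h1 h2⟩
instance : IsTotal (ℕ × ℕ) plexLE := ⟨by intro a b; unfold plexLE; omega⟩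

/-- Lexicographic order on `ℕ × ℕ`: compare first coordinates first. -/
def lexLE (a b : ℕ × ℕ) : Prop :=
  a.1 < b.1 ∨ (a.1 = b.1 ∧ a.2 ≤ b.2)

/-- Strict lexicographic order on `ℕ × ℕ`. -/
def lexLT (a b : ℕ × ℕ) : Prop :=
  a.1 < b.1 ∨ (a.1 = b.1 ∧ a.2 < b.2)

instance : DecidableRel lexLE := fun a b => by unfold lexLE; exact inferInstance
instance : IsTrans (ℕ × ℕ) lexLE := ⟨by intro a b c hab hbc; unfold lexLE at *; omega⟩
instance : IsAntisymm (ℕ × ℕ) lexLE := ⟨by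
  intro a b hab hba
  unfold lexLE at hab hba
  have h1 : a.1 = b.1 := by omega
  have h2 : a.2 = b.2 := by omega
  exact Prod.ext h1 h2⟩
instance : IsTotal (ℕ × ℕ) lexLE := ⟨by intro a b; unfold lexLE; omega⟩

/-- The lattice determinant of a list of `n` biexponents:
`Δ = det(x_i^{p_j} y_i^{q_j})`, in the ring `ℚ[x_1,…,x_n,y_1,…,y_n]`,
where `Sum.inl i` stands for `x_{i+1}` and `Sum.inr i` for `y_{i+1}`. -/
def deltaOfList (n : ℕ) (L : Fin n → ℕ × ℕ) : MvPolynomial (Fin n ⊕ Fin n) ℚ :=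
  Matrix.det (Matrix.of fun i j : Fin n =>
    X (Sum.inl i) ^ (L j).1 * X (Sum.inr i) ^ (L j).2)

/-- The lattice determinant of a lattice diagram (finite set of cells), the cells
being listed in increasing pseudo-lexicographic order; `0` if the diagram does not
have exactly `n` cells. -/
def deltaOfFinset (n : ℕ) (D : Finset (ℕ × ℕ)) : MvPolynomial (Fin n ⊕ Fin n) ℚ :=
  if h : D.card = n then
    deltaOfList n fun i => (D.sort plexLE).get ⟨i.1, by rw [Finset.length_sort, h]; exact i.2⟩
  else 0

open scoped Classical in
/-- The lattice determinant of a list of integer biexponents: `0` if some coordinate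
is negative (and `0` if two biexponents coincide, since then the determinant has two
equal columns). -/
def deltaOfListZ (n : ℕ) (L : Fin n → ℤ × ℤ) : MvPolynomial (Fin n ⊕ Fin n) ℚ :=
  if ∀ j, 0 ≤ (L j).1 ∧ 0 ≤ (L j).2 then
    deltaOfList n fun j => ((L j).1.toNat, (L j).2.toNat)
  else 0

/-- The Ferrers diagram of a partition with `h` rows and parts `μ 0 ≥ μ 1 ≥ …`:
the set of cells `(r, c)` with `r < h` and `c < μ r`. -/
def ferrers (h : ℕ) (μ : ℕ → ℕ) : Finset (ℕ × ℕ) :=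
  (Finset.range h ×ˢ Finset.range (μ 0)).filter fun rc => rc.2 < μ rc.1

/-- The shadow of the cell `(i, j)` in the diagram `F`. -/
def shadowF (F : Finset (ℕ × ℕ)) (i j : ℕ) : Finset (ℕ × ℕ) :=
  F.filter fun c => i ≤ c.1 ∧ j ≤ c.2

/-- The space `M^k_{i,j}(X,Y)`: the sum of the spaces `M_{μ/S}` over all `k`-element
subsets `S` of the shadow of `(i,j)` in the diagram `F` (of a partition of `n + k`). -/
def Mk (n k : ℕ) (F : Finset (ℕ × ℕ)) (i j : ℕ) :
    Submodule ℚ (MvPolynomial (Fin n ⊕ Fin n) ℚ) :=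
  ⨆ S ∈ Finset.powersetCard k (shadowF F i j), derivSpan (deltaOfFinset n (F \ S))

/-- The submodule of polynomials involving only the `x` variables
(elements of `Y`-degree `0`). -/
def onlyX (n : ℕ) : Submodule ℚ (MvPolynomial (Fin n ⊕ Fin n) ℚ) :=
  Subalgebra.toSubmodule (MvPolynomial.supported ℚ (Set.range Sum.inl))

/-- The space `M^k_{i,j}(X)`: the elements of `M^k_{i,j}(X,Y)` of `Y`-degree 0. -/
def MkX (n k : ℕ) (F : Finset (ℕ × ℕ)) (i j : ℕ) :
    Submodule ℚ (MvPolynomial (Fin n ⊕ Fin n) ℚ) :=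
  Mk n k F i j ⊓ onlyX n

end

/-!
Expanding `Δ_μ(X_{n+k};Y_{n+k})` along its last `k` rows writes it as a sum, over injective
choices `j` of `k` columns, of `∏ₘ x_{n+m}^{p_{j m}} y_{n+m}^{q_{j m}}` times the complementary
minor, which is `±Δ_{μ/S_j}(X_n;Y_n)` for the set `S_j` of cells indexing the chosen columns.
The minors do not involve the last `k` pairs of variables, so the operator
`∂x_{n+1}^{a₁}∂y_{n+1}^{b₁}⋯` only differentiates the monomial factors. The monomial attached
to `j` is killed unless every chosen cell lies in the shadow of the corresponding `(a_m, b_m)`, and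
what is left is a constant multiple of a monomial which is a nonzero constant exactly when the
chosen cells are the `(a_m, b_m)` themselves.
-/

section MonDiff

variable {σ : Type*} [DecidableEq σ]

theorem monDiff_eq_sum (m : σ →₀ ℕ) (Q : MvPolynomial σ ℚ) :
    monDiff m Q = (AddMonoidAlgebra.coeff Q).sum fun a c =>
      monomial (a - m) (c * ∏ v ∈ m.support, ((a v).descFactorial (m v) : ℚ)) := by
  rw [sum_def]; rfl

theorem monDiff_monomial (m a : σ →₀ ℕ) (c : ℚ) :
    monDiff m (monomial a c) =
      monomial (a - m) (c * ∏ v ∈ m.support, ((a v).descFactorial (m v) : ℚ)) := by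
  rw [monDiff_eq_sum, sum_monomial_eq (by simp)]

theorem monDiff_add (m : σ →₀ ℕ) (P Q : MvPolynomial σ ℚ) :
    monDiff m (P + Q) = monDiff m P + monDiff m Q := by
  simp only [monDiff_eq_sum]
  exact Finsupp.sum_add_index' (by simp) (by simp [add_mul])

theorem monDiff_sum {ι : Type*} (m : σ →₀ ℕ) (s : Finset ι)
    (f : ι → MvPolynomial σ ℚ) :
    monDiff m (∑ i ∈ s, f i) = ∑ i ∈ s, monDiff m (f i) :=
  map_sum (AddMonoidHom.mk' (monDiff m) (monDiff_add m)) f s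

theorem applyDiff_monomial_one (m : σ →₀ ℕ) (Q : MvPolynomial σ ℚ) :
    applyDiff (monomial m 1) Q = monDiff m Q := by
  rw [applyDiff, support_monomial, if_neg one_ne_zero, Finset.sum_singleton,
    coeff_monomial, if_pos rfl, one_smul]

theorem monDiff_monomial_of_not_le {m a : σ →₀ ℕ} (h : ¬ m ≤ a) (c : ℚ) :
    monDiff m (monomial a c) = 0 := by
  obtain ⟨v, hv⟩ := not_forall.1 (mt Finsupp.le_def.2 h)
  rw [monDiff_monomial, Finset.prod_eq_zero (i := v) (by simp; omega)
    (by rw [Nat.descFactorial_eq_zero_iff_lt.2 (not_le.1 hv), Nat.cast_zero]), mul_zero,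
    monomial_zero]

theorem monDiff_monomial_self (m : σ →₀ ℕ) :
    monDiff m (monomial m 1) = C (∏ v ∈ m.support, ((m v).factorial : ℚ)) := by
  simp [monDiff_monomial, Nat.descFactorial_self, monomial_zero']

theorem constantCoeff_monDiff_monomial {m a : σ →₀ ℕ} (h : a ≠ m) (c : ℚ) :
    constantCoeff (monDiff m (monomial a c)) = 0 := by
  by_cases hle : m ≤ a
  · rw [monDiff_monomial, constantCoeff_monomial, if_neg]
    exact fun h0 => h (le_antisymm (tsub_eq_zero_iff_le.1 h0) hle)
  · rw [monDiff_monomial_of_not_le hle, map_zero]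

theorem monDiff_mul_of_disjoint (m : σ →₀ ℕ) (P Q : MvPolynomial σ ℚ)
    (hQ : ∀ b ∈ Q.support, ∀ v ∈ m.support, b v = 0) :
    monDiff m (P * Q) = monDiff m P * Q := by
  induction P using MvPolynomial.induction_on' with
  | monomial a c =>
    conv_lhs => rw [Q.as_sum, Finset.mul_sum, monDiff_sum]
    conv_rhs => rw [Q.as_sum, Finset.mul_sum]
    refine Finset.sum_congr rfl fun b hb => ?_
    have hval : ∀ v ∈ m.support, (a + b) v = a v := fun v hv => by simp [hQ b hb v hv]
    rw [monomial_mul, monDiff_monomial, monDiff_monomial, monomial_mul,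
      Finset.prod_congr rfl fun v hv => by rw [hval v hv], mul_right_comm]
    congr 2
    ext v
    by_cases hv : v ∈ m.support
    · simp [hQ b hb v hv]
    · simp [Finsupp.notMem_support_iff.1 hv]
  | add p q hp hq => rw [add_mul, monDiff_add, monDiff_add, hp, hq, add_mul]

theorem monDiff_rename {τ : Type*} [DecidableEq τ] {ι : σ → τ} (hι : Function.Injective ι)
    (m : σ →₀ ℕ) (P : MvPolynomial σ ℚ) :
    monDiff (m.mapDomain ι) (rename ι P) = rename ι (monDiff m P) := by
  induction P using MvPolynomial.induction_on' with
  | monomial a c =>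
    rw [rename_monomial, monDiff_monomial, monDiff_monomial, rename_monomial,
      ← Finsupp.mapDomain_tsub hι, Finsupp.mapDomain_support_of_injective hι,
      Finset.prod_image hι.injOn]
    simp [Finsupp.mapDomain_apply hι]
  | add p q hp hq => rw [map_add, monDiff_add, monDiff_add, hp, hq, map_add]

theorem monDiff_rename_mul_rename {σ' τ : Type*} [DecidableEq τ]
    {ι : σ → τ} {κ : σ' → τ}
    (hι : Function.Injective ι) (hκ : Function.Injective κ) (hικ : ∀ a b, ι a ≠ κ b)
    (m : σ →₀ ℕ) (P : MvPolynomial σ ℚ) (Q : MvPolynomial σ' ℚ) :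
    monDiff (m.mapDomain ι) (rename ι P * rename κ Q) =
      rename ι (monDiff m P) * rename κ Q := by
  classical
  rw [monDiff_mul_of_disjoint, monDiff_rename hι]
  intro b hb v hv
  rw [support_rename_of_injective hκ] at hb
  obtain ⟨b, -, rfl⟩ := Finset.mem_image.1 hb
  rw [Finsupp.mapDomain_support_of_injective hι] at hv
  obtain ⟨u, -, rfl⟩ := Finset.mem_image.1 hv
  exact Finsupp.mapDomain_of_notMem_range _ _ (by rintro ⟨w, hw⟩; exact hικ u w hw.symm)

end MonDiff

section LaplaceLastRows

variable {R : Type*} [CommRing R] {n k : ℕ}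

def unitLastRows (M : Matrix (Fin (n + k)) (Fin (n + k)) R) (j : Fin k → Fin (n + k)) :
    Matrix (Fin (n + k)) (Fin (n + k)) R :=
  Fin.addCases (fun i => M (Fin.castAdd k i)) (fun m => Pi.single (j m) 1)

theorem det_eq_sum_unitLastRows (M : Matrix (Fin (n + k)) (Fin (n + k)) R) :
    M.det = ∑ j : Fin k → Fin (n + k),
      (∏ m, M (Fin.natAdd n m) (j m)) * (unitLastRows M j).det := by
  classical
  -- multilinear expansion of the last rows in the unit vectors; the first rows are one-term sums
  let A : Fin (n + k) → Finset (Fin (n + k)) :=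
    Fin.addCases (fun i => {Fin.castAdd k i}) (fun _ => Finset.univ)
  let g : Fin (n + k) → Fin (n + k) → Fin (n + k) → R :=
    Fin.addCases (fun i _ => M (Fin.castAdd k i))
      (fun m t => M (Fin.natAdd n m) t • Pi.single t 1)
  have hrows : M = fun i => ∑ t ∈ A i, g i t := by
    funext i
    induction i using Fin.addCases with
    | left i => simp [A, g]
    | right m =>
      simp only [A, g, Fin.addCases_right]
      simp_rw [← Pi.single_smul, smul_eq_mul, mul_one, Finset.univ_sum_single]
  have hterm : ∀ r : Fin (n + k) → Fin (n + k),
      Matrix.detRowAlternating (fun i => g i (r i)) =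
        (∏ m, M (Fin.natAdd n m) (r (Fin.natAdd n m))) *
          (unitLastRows M fun m => r (Fin.natAdd n m)).det := by
    intro r
    let c : Fin (n + k) → R :=
      Fin.addCases (fun _ => 1) (fun m => M (Fin.natAdd n m) (r (Fin.natAdd n m)))
    have hsmul : (fun i => g i (r i)) =
        fun i => c i • unitLastRows M (fun m => r (Fin.natAdd n m)) i := by
      funext i
      induction i using Fin.addCases <;> simp [c, g, unitLastRows]
    rw [hsmul]
    refine (AlternatingMap.map_smul_univ _ c _).trans ?_
    simp [c, Fin.prod_univ_add, Matrix.det]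
  calc M.det = Matrix.detRowAlternating (fun i => ∑ t ∈ A i, g i t) := by rw [← hrows]; rfl
    _ = ∑ r ∈ Fintype.piFinset A, Matrix.detRowAlternating (fun i => g i (r i)) :=
      Matrix.detRowAlternating.toMultilinearMap.map_sum_finset g A
    _ = _ := ?_
  refine Finset.sum_nbij' (fun r m => r (Fin.natAdd n m))
    (fun j => Fin.addCases (Fin.castAdd k) j) (by simp) ?_ ?_ (by simp) (fun r _ => hterm r)
  · intro j _
    rw [Fintype.mem_piFinset]
    intro i
    induction i using Fin.addCases <;> simp [A]
  · intro r hr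
    funext i
    induction i using Fin.addCases with
    | left i =>
      have := Fintype.mem_piFinset.1 hr (Fin.castAdd k i)
      simp only [A, Fin.addCases_left, Finset.mem_singleton] at this
      simp [this]
    | right m => simp

theorem det_unitLastRows_of_not_injective (M : Matrix (Fin (n + k)) (Fin (n + k)) R)
    {j : Fin k → Fin (n + k)} (hj : ¬ Function.Injective j) :
    (unitLastRows M j).det = 0 := by
  obtain ⟨m, m', hjm, hmm'⟩ := Function.not_injective_iff.1 hj
  exact Matrix.det_zero_of_row_eq ((Fin.natAdd_injective k n).ne hmm')
    (by simp [unitLastRows, hjm])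

theorem det_eq_sum_injective_unitLastRows (M : Matrix (Fin (n + k)) (Fin (n + k)) R) :
    M.det = ∑ j ∈ Finset.univ.filter Function.Injective,
      (∏ m, M (Fin.natAdd n m) (j m)) * (unitLastRows M j).det := by
  rw [det_eq_sum_unitLastRows, Finset.sum_filter_of_ne]
  intro j _ hj
  by_contra hinj
  exact hj (by rw [det_unitLastRows_of_not_injective M hinj, mul_zero])

end LaplaceLastRows

section ComplementMinor

variable {R : Type*} [CommRing R] {n k : ℕ}

theorem card_compl_image_univ {j : Fin k → Fin (n + k)} (hj : Function.Injective j) :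
    (Finset.univ.image j)ᶜ.card = n := by
  rw [Finset.card_compl, Finset.card_image_of_injective _ hj]
  simp

def complEnum {j : Fin k → Fin (n + k)} (hj : Function.Injective j) : Fin n ↪o Fin (n + k) :=
  (Finset.univ.image j)ᶜ.orderEmbOfFin (card_compl_image_univ hj)

theorem complEnum_ne {j : Fin k → Fin (n + k)} (hj : Function.Injective j) (i : Fin n)
    (m : Fin k) : complEnum hj i ≠ j m := by
  have := Finset.orderEmbOfFin_mem _ (card_compl_image_univ hj) i
  simp only [Finset.mem_compl, Finset.mem_image, Finset.mem_univ, true_and, not_exists] at this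
  exact fun h => this m h.symm

theorem mem_range_complEnum {j : Fin k → Fin (n + k)} (hj : Function.Injective j)
    {t : Fin (n + k)} (ht : ∀ m, t ≠ j m) : t ∈ Set.range (complEnum hj) := by
  rw [complEnum, Finset.range_orderEmbOfFin]
  simpa [eq_comm] using ht

theorem det_unitLastRows_of_injective (M : Matrix (Fin (n + k)) (Fin (n + k)) R)
    {j : Fin k → Fin (n + k)} (hj : Function.Injective j) :
    ∃ ε : ℤˣ, (unitLastRows M j).det =
      ε • (M.submatrix (Fin.castAdd k) (complEnum hj)).det := by
  classical
  have hinj : Function.Injective (Sum.elim (complEnum hj) j) :=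
    (complEnum hj).injective.sumElim hj (complEnum_ne hj)
  -- listing the columns as `complEnum hj`, then `j`, makes the matrix block triangular
  let e : Equiv.Perm (Fin (n + k)) := finSumFinEquiv.symm.trans
    (Equiv.ofBijective _ ((Fintype.bijective_iff_injective_and_card _).2 ⟨hinj, by simp⟩))
  have hblocks : ((unitLastRows M j).submatrix id e).reindex finSumFinEquiv.symm
      finSumFinEquiv.symm = Matrix.fromBlocks (M.submatrix (Fin.castAdd k) (complEnum hj))
        (Matrix.of fun i m => M (Fin.castAdd k i) (j m)) 0 1 := by
    have hne : ∀ m i, j m ≠ complEnum hj i := fun m i => (complEnum_ne hj i m).symm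
    ext (i | i) (t | t) <;>
      simp [e, unitLastRows, Pi.single_apply, hne, Matrix.one_apply, hj.eq_iff, eq_comm]
  refine ⟨Equiv.Perm.sign e, ?_⟩
  have := congrArg Matrix.det hblocks
  rw [Matrix.det_reindex_self, Matrix.det_permute', Matrix.det_fromBlocks_zero₂₁,
    Matrix.det_one, mul_one] at this
  rw [← this, Units.smul_def, zsmul_eq_mul, ← mul_assoc, ← Int.cast_mul, ← Units.val_mul,
    Int.units_mul_self, Units.val_one, Int.cast_one, one_mul]

end ComplementMinor

section SortedCells

variable {N : ℕ} (D : Finset (ℕ × ℕ)) (hD : D.card = N)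

def sortedCell : Fin N → ℕ × ℕ :=
  fun i => (D.sort plexLE).get ⟨i, by rw [Finset.length_sort, hD]; exact i.isLt⟩

theorem deltaOfFinset_eq_deltaOfList :
    deltaOfFinset N D = deltaOfList N (sortedCell D hD) := by
  rw [deltaOfFinset, dif_pos hD]
  rfl

theorem sortedCell_injective : Function.Injective (sortedCell D hD) := fun _ _ h =>
  Fin.ext (Fin.mk.inj_iff.1 ((D.sort_nodup plexLE).get_inj_iff.1 h))

theorem sortedCell_mem (i : Fin N) : sortedCell D hD i ∈ D :=
  (Finset.mem_sort plexLE).1 (List.get_mem _ _)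

theorem exists_sortedCell_eq {x : ℕ × ℕ} (hx : x ∈ D) : ∃ i, sortedCell D hD i = x := by
  obtain ⟨t, rfl⟩ := List.mem_iff_get.1 ((Finset.mem_sort plexLE).2 hx)
  exact ⟨⟨t, by simpa [hD] using t.isLt⟩, rfl⟩

theorem sortedCell_monotone {a b : Fin N} (h : a < b) :
    plexLE (sortedCell D hD a) (sortedCell D hD b) :=
  List.Pairwise.rel_get_of_lt (D.pairwise_sort plexLE) h

theorem sortedCell_eq_of_range {f : Fin N → ℕ × ℕ}
    (hmono : ∀ a b, a < b → plexLE (f a) (f b))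
    (hinj : Function.Injective f) (hrange : ∀ x, x ∈ D ↔ x ∈ Set.range f) :
    sortedCell D hD = f := by
  have hsort : D.sort plexLE = List.ofFn f := by
    refine List.Perm.eq_of_pairwise' (D.pairwise_sort plexLE) (List.pairwise_ofFn.2 hmono) ?_
    refine List.perm_of_nodup_nodup_toFinset_eq (D.sort_nodup plexLE)
      (List.nodup_ofFn.2 hinj) ?_
    ext x
    simp [hrange]
  funext i
  simp [sortedCell, hsort]

end SortedCells

section SortedCellsSdiff

variable {n k : ℕ} {D : Finset (ℕ × ℕ)} (hD : D.card = n + k) {j : Fin k → Fin (n + k)}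

theorem card_sdiff_image_sortedCell (hj : Function.Injective j) :
    (D \ Finset.univ.image fun m => sortedCell D hD (j m)).card = n := by
  rw [Finset.card_sdiff_of_subset, hD, Finset.card_image_of_injective
    (f := fun m => sortedCell D hD (j m)) _ ((sortedCell_injective D hD).comp hj)]
  · simp
  · exact Finset.image_subset_iff.2 fun m _ => sortedCell_mem D hD (j m)

theorem sortedCell_sdiff_image (hj : Function.Injective j) :
    sortedCell _ (card_sdiff_image_sortedCell hD hj) =
      fun i => sortedCell D hD (complEnum hj i) := by
  have hL := sortedCell_injective D hD
  refine sortedCell_eq_of_range _ _ (fun _ _ h => sortedCell_monotone D hD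
    ((complEnum hj).strictMono h)) (hL.comp (complEnum hj).injective) fun x => ?_
  simp only [Finset.mem_sdiff, Finset.mem_image, Finset.mem_univ, true_and, not_exists,
    Set.mem_range]
  constructor
  · rintro ⟨hx, hxj⟩
    obtain ⟨t, rfl⟩ := exists_sortedCell_eq D hD hx
    obtain ⟨i, rfl⟩ := mem_range_complEnum hj (t := t) fun m h => hxj m (by rw [h])
    exact ⟨i, rfl⟩
  · rintro ⟨i, rfl⟩
    exact ⟨sortedCell_mem D hD _, fun m h => complEnum_ne hj i m (hL h).symm⟩

theorem deltaOfFinset_sdiff_image_sortedCell (hj : Function.Injective j) :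
    deltaOfFinset n (D \ Finset.univ.image fun m => sortedCell D hD (j m)) =
      deltaOfList n fun i => sortedCell D hD (complEnum hj i) := by
  rw [deltaOfFinset_eq_deltaOfList _ (card_sdiff_image_sortedCell hD hj),
    sortedCell_sdiff_image]

end SortedCellsSdiff

section CellExponents

variable {k : ℕ}

noncomputable def cellExp (f : Fin k → ℕ × ℕ) : Fin k ⊕ Fin k →₀ ℕ :=
  Finsupp.equivFunOnFinite.symm (Sum.elim (fun m => (f m).1) (fun m => (f m).2))

theorem prod_X_pow_eq_monomial_cellExp (f : Fin k → ℕ × ℕ) :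
    ∏ m, (X (Sum.inl m) ^ (f m).1 * X (Sum.inr m) ^ (f m).2 :
      MvPolynomial (Fin k ⊕ Fin k) ℚ) = monomial (cellExp f) 1 := by
  rw [monomial_eq, C_1, one_mul, Finsupp.prod_fintype _ _ (by simp), Fintype.prod_sum_type,
    ← Finset.prod_mul_distrib]
  simp [cellExp]

theorem cellExp_le_cellExp_iff {f g : Fin k → ℕ × ℕ} :
    cellExp f ≤ cellExp g ↔ ∀ m, (f m).1 ≤ (g m).1 ∧ (f m).2 ≤ (g m).2 := by
  simp [Finsupp.le_def, cellExp, Sum.forall, forall_and]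

theorem cellExp_injective : Function.Injective (cellExp (k := k)) := fun f g h =>
  funext fun m => Prod.ext (by simpa [cellExp] using congrArg (· (Sum.inl m)) h)
    (by simpa [cellExp] using congrArg (· (Sum.inr m)) h)

end CellExponents

section LatticeMatrix

variable {n k : ℕ}

noncomputable def latticeMatrix {N : ℕ} (L : Fin N → ℕ × ℕ) :
    Matrix (Fin N) (Fin N) (MvPolynomial (Fin N ⊕ Fin N) ℚ) :=
  Matrix.of fun i j => X (Sum.inl i) ^ (L j).1 * X (Sum.inr i) ^ (L j).2

theorem prod_latticeMatrix_natAdd (L : Fin (n + k) → ℕ × ℕ) (j : Fin k → Fin (n + k)) :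
    ∏ m, latticeMatrix L (Fin.natAdd n m) (j m) =
      rename (Sum.map (Fin.natAdd n) (Fin.natAdd n))
        (monomial (cellExp fun m => L (j m)) 1) := by
  rw [← prod_X_pow_eq_monomial_cellExp]
  simp [latticeMatrix]

theorem det_latticeMatrix_submatrix_castAdd (L : Fin (n + k) → ℕ × ℕ)
    (o : Fin n → Fin (n + k)) :
    ((latticeMatrix L).submatrix (Fin.castAdd k) o).det =
      rename (Sum.map (Fin.castAdd k) (Fin.castAdd k)) (deltaOfList n fun i => L (o i)) := by
  rw [deltaOfList, AlgHom.map_det]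
  congr 1
  ext i j
  simp [latticeMatrix]

theorem sumMap_natAdd_ne_sumMap_castAdd (a : Fin k ⊕ Fin k) (b : Fin n ⊕ Fin n) :
    Sum.map (Fin.natAdd n) (Fin.natAdd n) a ≠ Sum.map (Fin.castAdd k) (Fin.castAdd k) b := by
  rcases a with a | a <;> rcases b with b | b <;> simp [Fin.ext_iff] <;> omega

theorem monDiff_laplaceTerm_latticeMatrix (L : Fin (n + k) → ℕ × ℕ)
    (d : Fin k ⊕ Fin k →₀ ℕ)
    {j : Fin k → Fin (n + k)} (hj : Function.Injective j) :
    ∃ ε : ℤˣ, monDiff (d.mapDomain (Sum.map (Fin.natAdd n) (Fin.natAdd n)))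
        ((∏ m, latticeMatrix L (Fin.natAdd n m) (j m)) *
          (unitLastRows (latticeMatrix L) j).det) =
      (ε : ℤ) • (rename (Sum.map (Fin.natAdd n) (Fin.natAdd n))
          (monDiff d (monomial (cellExp fun m => L (j m)) 1)) *
        rename (Sum.map (Fin.castAdd k) (Fin.castAdd k))
          (deltaOfList n fun i => L (complEnum hj i))) := by
  obtain ⟨ε, hε⟩ := det_unitLastRows_of_injective (latticeMatrix L) hj
  refine ⟨ε, ?_⟩
  rw [hε, prod_latticeMatrix_natAdd, det_latticeMatrix_submatrix_castAdd, Units.smul_def,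
    ← map_zsmul, monDiff_rename_mul_rename
      ((Fin.natAdd_injective k n).sumMap (Fin.natAdd_injective k n))
      ((Fin.castAdd_injective n k).sumMap (Fin.castAdd_injective n k))
      sumMap_natAdd_ne_sumMap_castAdd, map_zsmul, mul_smul_comm]

end LatticeMatrix

section Derivative

variable {n k : ℕ} (F : Finset (ℕ × ℕ)) (hF : F.card = n + k) (cells : Fin k → ℕ × ℕ)

theorem applyDiff_deltaOfFinset_eq_sum_shadow :
    ∃ ε : (Fin k → Fin (n + k)) → ℤˣ,
      applyDiff (∏ m : Fin k, (X (Sum.inl (Fin.natAdd n m)) ^ (cells m).1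
          * X (Sum.inr (Fin.natAdd n m)) ^ (cells m).2)) (deltaOfFinset (n + k) F) =
        ∑ j ∈ Finset.univ.filter (fun j => Function.Injective j ∧
            cellExp cells ≤ cellExp fun m => sortedCell F hF (j m)),
          (ε j : ℤ) • (rename (Sum.map (Fin.natAdd n) (Fin.natAdd n))
              (monDiff (cellExp cells) (monomial (cellExp fun m => sortedCell F hF (j m)) 1)) *
            rename (Sum.map (Fin.castAdd k) (Fin.castAdd k))
              (deltaOfFinset n (F \ Finset.univ.image fun m => sortedCell F hF (j m)))) := by
  classical
  set L := sortedCell F hF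
  have hP : ∏ m : Fin k, (X (Sum.inl (Fin.natAdd n m)) ^ (cells m).1
      * X (Sum.inr (Fin.natAdd n m)) ^ (cells m).2 :
        MvPolynomial (Fin (n + k) ⊕ Fin (n + k)) ℚ) =
        monomial ((cellExp cells).mapDomain (Sum.map (Fin.natAdd n) (Fin.natAdd n))) 1 := by
    rw [← rename_monomial, ← prod_X_pow_eq_monomial_cellExp]
    simp
  have hterm := fun j (hj : Function.Injective j) =>
    deltaOfFinset_sdiff_image_sortedCell hF hj ▸
      monDiff_laplaceTerm_latticeMatrix L (cellExp cells) hj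
  choose! ε hε using hterm
  refine ⟨ε, ?_⟩
  rw [hP, applyDiff_monomial_one, deltaOfFinset_eq_deltaOfList F hF, deltaOfList,
    ← latticeMatrix, det_eq_sum_injective_unitLastRows, monDiff_sum, ← Finset.filter_filter,
    Finset.sum_congr rfl fun j hj => hε j (Finset.mem_filter.1 hj).2]
  refine (Finset.sum_filter_of_ne fun j _ hne => ?_).symm
  by_contra hle
  rw [monDiff_monomial_of_not_le hle] at hne
  simp at hne

end Derivative

theorem applyDiff_deltaOfFinset {n k : ℕ} (F : Finset (ℕ × ℕ)) (hF : F.card = n + k)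
    (cells : Fin k → ℕ × ℕ) (hcells : ∀ m, cells m ∈ F)
    (hinj : Function.Injective cells) :
    ∃ c : ℚ, c ≠ 0 ∧
    ∃ (T : Finset (Fin k → ℕ × ℕ))
      (coef : (Fin k → ℕ × ℕ) → MvPolynomial (Fin (n + k) ⊕ Fin (n + k)) ℚ),
      applyDiff
          (∏ m : Fin k,
            (X (Sum.inl (Fin.natAdd n m)) ^ (cells m).1
              * X (Sum.inr (Fin.natAdd n m)) ^ (cells m).2))
          (deltaOfFinset (n + k) F)
        = c • rename (Sum.map (Fin.castAdd k) (Fin.castAdd k))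
              (deltaOfFinset n (F \ Finset.image cells Finset.univ))
          + ∑ f ∈ T, coef f
              * rename (Sum.map (Fin.castAdd k) (Fin.castAdd k))
                (deltaOfFinset n (F \ Finset.image f Finset.univ)) ∧
      ∀ f ∈ T,
        Function.Injective f ∧
        (∀ m : Fin k, f m ∈ F ∧ (cells m).1 ≤ (f m).1 ∧ (cells m).2 ≤ (f m).2) ∧
        ∃ g : MvPolynomial (Fin k ⊕ Fin k) ℚ,
          coef f = rename (Sum.map (Fin.natAdd n) (Fin.natAdd n)) g ∧
          constantCoeff g = 0 := by
  classical
  obtain ⟨ε, hsum⟩ := applyDiff_deltaOfFinset_eq_sum_shadow F hF cells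
  set L := sortedCell F hF
  have hL : Function.Injective L := sortedCell_injective F hF
  choose j₀ hj₀ using fun m => exists_sortedCell_eq F hF (hcells m)
  have hLj₀ : (fun m => L (j₀ m)) = cells := funext hj₀
  let φ : (Fin k → Fin (n + k)) → Fin k → ℕ × ℕ := fun j m => L (j m)
  have hφ : Function.Injective φ := fun j j' h => funext fun m => hL (congrFun h m)
  have : Nonempty (Fin k → Fin (n + k)) := ⟨Fin.natAdd n⟩
  set S := Finset.univ.filter fun j => Function.Injective j ∧ cellExp cells ≤ cellExp (φ j)
  have hj₀S : j₀ ∈ S := by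
    refine Finset.mem_filter.2 ⟨Finset.mem_univ _, fun a b h => hinj ?_, ?_⟩
    · rw [← hj₀ a, ← hj₀ b, h]
    · simp only [φ, hLj₀, le_refl]
  -- `coef` reads the sign off the column choice `j = invFun φ f` that produces the cells `f`
  refine ⟨(ε j₀ : ℚ) * ∏ v ∈ (cellExp cells).support, ((cellExp cells v).factorial : ℚ),
    mul_ne_zero (by simp) (Finset.prod_ne_zero_iff.2 fun _ _ => by positivity),
    (S.erase j₀).image φ,
    fun f => (ε (Function.invFun φ f) : ℤ) • rename (Sum.map (Fin.natAdd n) (Fin.natAdd n))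
      (monDiff (cellExp cells) (monomial (cellExp f) 1)), ?_, ?_⟩
  · rw [hsum, ← Finset.add_sum_erase _ _ hj₀S, Finset.sum_image hφ.injOn]
    congr 1
    · simp only [hLj₀, monDiff_monomial_self, rename_C, ← smul_eq_C_mul,
        ← Int.cast_smul_eq_zsmul ℚ, smul_smul]
    · refine Finset.sum_congr rfl fun j _ => ?_
      simp only [φ, Function.leftInverse_invFun hφ j, smul_mul_assoc]
  · intro f hf
    obtain ⟨j, hj, rfl⟩ := Finset.mem_image.1 hf
    obtain ⟨hjj₀, hjS⟩ := Finset.mem_erase.1 hj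
    obtain ⟨-, hjinj, hshadow⟩ := Finset.mem_filter.1 hjS
    refine ⟨hL.comp hjinj,
      fun m => ⟨sortedCell_mem F hF _, cellExp_le_cellExp_iff.1 hshadow m⟩,
      (ε (Function.invFun φ (φ j)) : ℤ) •
        monDiff (cellExp cells) (monomial (cellExp (φ j)) 1),
      (map_zsmul _ _ _).symm, ?_⟩
    rw [map_zsmul, constantCoeff_monDiff_monomial, smul_zero]
    exact fun h => hjj₀ (hφ (by rw [cellExp_injective h, ← hLj₀]))

theorem statement7_general (n k h : ℕ) (μ : ℕ → ℕ)
    (hcard : (ferrers h μ).card = n + k)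
    (cells : Fin k → ℕ × ℕ) (hcells : ∀ m, cells m ∈ ferrers h μ)
    (hsorted : ∀ a b : Fin k, a < b → lexLT (cells a) (cells b)) :
    ∃ c : ℚ, c ≠ 0 ∧
    ∃ (T : Finset (Fin k → ℕ × ℕ))
      (coef : (Fin k → ℕ × ℕ) → MvPolynomial (Fin (n + k) ⊕ Fin (n + k)) ℚ),
      applyDiff
          (∏ m : Fin k,
            (X (Sum.inl (Fin.natAdd n m)) ^ (cells m).1
              * X (Sum.inr (Fin.natAdd n m)) ^ (cells m).2))
          (deltaOfFinset (n + k) (ferrers h μ))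
        = c • MvPolynomial.rename (Sum.map (Fin.castAdd k) (Fin.castAdd k))
              (deltaOfFinset n (ferrers h μ \ Finset.image cells Finset.univ))
          + ∑ f ∈ T, coef f
              * MvPolynomial.rename (Sum.map (Fin.castAdd k) (Fin.castAdd k))
                (deltaOfFinset n (ferrers h μ \ Finset.image f Finset.univ)) ∧
      ∀ f ∈ T,
        Function.Injective f ∧
        (∀ m : Fin k, f m ∈ ferrers h μ ∧ (cells m).1 ≤ (f m).1 ∧ (cells m).2 ≤ (f m).2) ∧
        ∃ g : MvPolynomial (Fin k ⊕ Fin k) ℚ,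
          coef f = MvPolynomial.rename (Sum.map (Fin.natAdd n) (Fin.natAdd n)) g ∧
          MvPolynomial.constantCoeff g = 0 := by
  exact applyDiff_deltaOfFinset _ hcard cells hcells (Function.Injective.of_comp (f := toLex)
    (StrictMono.injective fun a b hab => Prod.Lex.toLex_lt_toLex.2 (hsorted a b hab)))

/-- Differentiating `Δ_μ(X_{n+k};Y_{n+k})` by the monomial
`x_{n+1}^{a₁} y_{n+1}^{b₁} ⋯ x_{n+k}^{a_k} y_{n+k}^{b_k}` attached to `k` distinct
cells `(a₁,b₁) < ⋯ < (a_k,b_k)` of `μ` (in increasing lexicographic order) yields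
`c · Δ_{μ/{(a₁,b₁),…,(a_k,b_k)}}` (`c ≠ 0`) plus a combination, with coefficients that
are polynomials in the last `k` pairs of variables vanishing at `0`, of polynomials
`Δ_{μ/S'}` where the cells of `S'` lie in the shadows of the corresponding cells. -/
theorem statement7 (n k h : ℕ) (μ : ℕ → ℕ)
    (hanti : Antitone μ) (hpos : ∀ r, r < h → 0 < μ r) (hzero : ∀ r, h ≤ r → μ r = 0)
    (hcard : (ferrers h μ).card = n + k)
    (cells : Fin k → ℕ × ℕ) (hcells : ∀ m, cells m ∈ ferrers h μ)
    (hsorted : ∀ a b : Fin k, a < b → lexLT (cells a) (cells b)) :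
    ∃ c : ℚ, c ≠ 0 ∧
    ∃ (T : Finset (Fin k → ℕ × ℕ))
      (coef : (Fin k → ℕ × ℕ) → MvPolynomial (Fin (n + k) ⊕ Fin (n + k)) ℚ),
      applyDiff
          (∏ m : Fin k,
            (X (Sum.inl (Fin.natAdd n m)) ^ (cells m).1
              * X (Sum.inr (Fin.natAdd n m)) ^ (cells m).2))
          (deltaOfFinset (n + k) (ferrers h μ))
        = c • MvPolynomial.rename (Sum.map (Fin.castAdd k) (Fin.castAdd k))
              (deltaOfFinset n (ferrers h μ \ Finset.image cells Finset.univ))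
          + ∑ f ∈ T, coef f
              * MvPolynomial.rename (Sum.map (Fin.castAdd k) (Fin.castAdd k))
                (deltaOfFinset n (ferrers h μ \ Finset.image f Finset.univ)) ∧
      ∀ f ∈ T,
        Function.Injective f ∧
        (∀ m : Fin k, f m ∈ ferrers h μ ∧ (cells m).1 ≤ (f m).1 ∧ (cells m).2 ≤ (f m).2) ∧
        ∃ g : MvPolynomial (Fin k ⊕ Fin k) ℚ,
          coef f = MvPolynomial.rename (Sum.map (Fin.natAdd n) (Fin.natAdd n)) g ∧
          MvPolynomial.constantCoeff g = 0 :=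
  statement7_general n k h μ hcard cells hcells hsorted
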